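/- arXiv:0912.3097 — 3 statements merged into one kernel-verified Lean document; each statement's English description precedes it below -/
import Mathlib

section
/- Let u, v₂, v₃, v₄ be affinely independent points in ℝ³ and let σ be the tetrahedron [uv₂v₃v₄]. Suppose σ is 3-well-centered and the six face angles ∠uvᵢvⱼ for i, j ∈ {2,3,4}, i ≠ j (the angle at vertex vᵢ in the triangle [uvᵢvⱼ]) are all acute. Then there exists a point v₁ ∈ ℝ³ such that each of the three tetrahedra [uv₂v₃v₁], [uv₃v₄v₁], [uv₄v₂v₁] is a nondegenerate 3-well-centered tetrahedron, and for each i ∈ {2,3,4} both face angles ∠uv₁vᵢ and ∠uvᵢv₁ are acute. -/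
open scoped RealInnerProductSpace
open Finset EuclideanGeometry

noncomputable section
set_option maxHeartbeats 1000000

abbrev E3 := EuclideanSpace ℝ (Fin 3)

/-- A simplex is well-centered if its circumcenter is a strictly positive affine
combination of its vertices. -/
def Affine.Simplex.IsWellCentered {n : ℕ} (s : Affine.Simplex ℝ E3 n) : Prop :=
  ∃ w : Fin (n + 1) → ℝ, (∑ i, w i) = 1 ∧ (∀ i, 0 < w i) ∧
    Finset.univ.affineCombination ℝ s.points w = s.circumcenter

/-- The four points form a nondegenerate 3-well-centered tetrahedron. -/
def IsWellCenteredTet (a b c d : E3) : Prop :=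
  ∃ h : AffineIndependent ℝ ![a, b, c, d],
    (⟨![a, b, c, d], h⟩ : Affine.Simplex ℝ E3 3).IsWellCentered

lemma inner_self_pos' {x : E3} (hx : x ≠ 0) : 0 < ⟪x, x⟫ := by
  rw [real_inner_self_eq_norm_sq]
  have : 0 < ‖x‖ := norm_pos_iff.mpr hx
  positivity

lemma gram_pos (U A B : E3) (h : LinearIndependent ℝ ![U, A, B]) (r2 a' b' e' : ℝ)
    (hu : ⟪U, U⟫ = r2) (ha : ⟪A, A⟫ = r2) (hb : ⟪B, B⟫ = r2)
    (ha' : ⟪U, A⟫ = a') (hb' : ⟪U, B⟫ = b') (he' : ⟪A, B⟫ = e') :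
    0 < r2 * (r2 * r2 - e' * e') - a' * (a' * r2 - e' * b') + b' * (a' * e' - r2 * b') := by
  have hinner : ∀ x y : E3, ⟪x, y⟫ = x 0 * y 0 + x 1 * y 1 + x 2 * y 2 := by
    intro x y
    simp [PiLp.inner_apply, RCLike.inner_apply, Fin.sum_univ_three, mul_comm]
  set T : ℝ := U 0 * (A 1 * B 2 - A 2 * B 1) - U 1 * (A 0 * B 2 - A 2 * B 0)
      + U 2 * (A 0 * B 1 - A 1 * B 0) with hT
  have key : (⟪U,U⟫) * ((⟪A,A⟫) * (⟪B,B⟫) - (⟪A,B⟫) * (⟪A,B⟫))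
      - (⟪U,A⟫) * ((⟪U,A⟫) * (⟪B,B⟫) - (⟪A,B⟫) * (⟪U,B⟫))
      + (⟪U,B⟫) * ((⟪U,A⟫) * (⟪A,B⟫) - (⟪A,A⟫) * (⟪U,B⟫)) = T ^ 2 := by
    simp only [hinner]; ring
  rw [hu, ha, hb, ha', hb', he'] at key
  rw [key]
  have hT0 : T ≠ 0 := by
    intro hT0
    set M : Matrix (Fin 3) (Fin 3) ℝ :=
      !![U 0, U 1, U 2; A 0, A 1, A 2; B 0, B 1, B 2] with hM
    have hdet : M.det = T := by
      rw [Matrix.det_fin_three]; simp [hM]; ring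
    have hex : ∃ v ≠ 0, Matrix.vecMul v M = 0 := by
      rw [Matrix.exists_vecMul_eq_zero_iff, hdet]; exact hT0
    obtain ⟨v, hv, hvM⟩ := hex
    have hcomb : ∑ i : Fin 3, v i • ![U, A, B] i = 0 := by
      rw [Fin.sum_univ_three]
      ext j
      have hj := congrFun hvM j
      simp [hM, Matrix.vecMul, dotProduct, Fin.sum_univ_three] at hj
      fin_cases j <;> (simp at hj ⊢; linarith)
    have hz := Fintype.linearIndependent_iff.mp h v hcomb
    exact hv (funext fun i => hz i)
  positivity

lemma aux_li (p : Fin 4 → E3) (hp : AffineIndependent ℝ p) (w : Fin 4 → ℝ)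
    (hw : ∑ i, w i = 1) (h3 : w 3 ≠ 0) {c : E3}
    (hc : Finset.univ.affineCombination ℝ p w = c) :
    LinearIndependent ℝ ![p 0 - c, p 1 - c, p 2 - c] := by
  have hcl : c = w 0 • p 0 + w 1 • p 1 + w 2 • p 2 + w 3 • p 3 := by
    rw [← hc, Finset.affineCombination_eq_linear_combination _ _ _ hw, Fin.sum_univ_four]
  rw [Fintype.linearIndependent_iff]
  intro g hg
  rw [Fin.sum_univ_three] at hg
  simp only [Matrix.cons_val_zero, Matrix.cons_val_one, Matrix.head_cons,
    Matrix.cons_val_two, Matrix.tail_cons] at hg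
  set s := g 0 + g 1 + g 2 with hs
  set W : Fin 4 → ℝ := ![g 0 - s * w 0, g 1 - s * w 1, g 2 - s * w 2, -(s * w 3)] with hW
  have hWsum : ∑ i, W i = 0 := by
    rw [Fin.sum_univ_four]; simp [hW]; have := hw; rw [Fin.sum_univ_four] at this; linear_combination (-s) * this - hs
  have hWv : Finset.univ.weightedVSub p W = 0 := by
    rw [Finset.weightedVSub_eq_linear_combination _ hWsum, Fin.sum_univ_four]
    simp only [hW, Matrix.cons_val_zero, Matrix.cons_val_one, Matrix.head_cons,
      Matrix.cons_val_two, Matrix.tail_cons, Matrix.cons_val_three]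
    have hg' : g 0 • (p 0 - c) + g 1 • (p 1 - c) + g 2 • (p 2 - c) = 0 := hg
    linear_combination (norm := module) hg' + s • hcl
  have hWz := (affineIndependent_iff_of_fintype ℝ p).mp hp W hWsum hWv
  have hs0 : s = 0 := by
    have := hWz 3
    simp [hW] at this
    rcases this with h | h
    · exact h
    · exact absurd h h3
  intro i
  fin_cases i
  · have := hWz 0; simp [hW, hs0] at this; simpa using this
  · have := hWz 1; simp [hW, hs0] at this; simpa using this
  · have := hWz 2; simp [hW, hs0] at this; simpa using this

lemma affineIndependent4_of_li (p q r s : E3)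
    (h : LinearIndependent ℝ ![q - p, r - p, s - p]) :
    AffineIndependent ℝ ![p, q, r, s] := by
  rw [affineIndependent_iff_linearIndependent_vsub ℝ _ 0]
  let e : Fin 3 ≃ {x : Fin 4 // x ≠ 0} :=
    { toFun := fun i => ⟨i.succ, Fin.succ_ne_zero i⟩
      invFun := fun j => Fin.pred j.1 j.2
      left_inv := fun i => by simp
      right_inv := fun j => Subtype.ext (Fin.succ_pred j.1 j.2) }
  apply (linearIndependent_equiv e).mp
  have : ((fun (i : {x : Fin 4 // x ≠ 0}) => ![p, q, r, s] i.1 -ᵥ ![p, q, r, s] 0) ∘ e)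
      = ![q - p, r - p, s - p] := by
    funext i
    fin_cases i <;> simp [e, vsub_eq_sub] <;> rfl
  rw [this]
  exact h

lemma angle_lt_of_inner_pos {x y : E3} (h : 0 < ⟪x, y⟫) :
    InnerProductGeometry.angle x y < Real.pi / 2 := by
  rw [InnerProductGeometry.angle, Real.arccos_lt_pi_div_two]
  have hx : x ≠ 0 := by rintro rfl; simp at h
  have hy : y ≠ 0 := by rintro rfl; simp at h
  have hx' : 0 < ‖x‖ := norm_pos_iff.mpr hx
  have hy' : 0 < ‖y‖ := norm_pos_iff.mpr hy
  positivity

lemma inner_pos_of_angle_lt {x y : E3} (hx : x ≠ 0) (hy : y ≠ 0)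
    (h : InnerProductGeometry.angle x y < Real.pi / 2) : 0 < ⟪x, y⟫ := by
  rw [InnerProductGeometry.angle, Real.arccos_lt_pi_div_two] at h
  have hx' : 0 < ‖x‖ := norm_pos_iff.mpr hx
  have hy' : 0 < ‖y‖ := norm_pos_iff.mpr hy
  rcases div_pos_iff.mp h with ⟨h1, _⟩ | ⟨_, h2⟩
  · exact h1
  · nlinarith

lemma eangle_eq (a b c : E3) : angle a b c = InnerProductGeometry.angle (a - b) (c - b) := rfl


lemma angleA_inner (U Z : E3) (r2 ε : ℝ) (hu : ⟪U, U⟫ = r2)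
    (h2ε : 0 < 2 - ε) (hεr : ε * r2 < r2 + ⟪U, Z⟫) :
    0 < ⟪(2 - ε) • U, Z + (1 - ε) • U⟫ := by
  rw [real_inner_smul_left, inner_add_right, real_inner_smul_right, hu]
  have key : 0 < ⟪U, Z⟫ + (1 - ε) * r2 := by linarith
  exact mul_pos h2ε key

lemma angleB_inner (U Z : E3) (r2 ε : ℝ) (hu : ⟪U, U⟫ = r2) (hz : ⟪Z, Z⟫ = r2)
    (hzu : ⟪U, Z⟫ < r2) (hε : 0 < ε) :
    0 < ⟪U - Z, (-(1 - ε)) • U - Z⟫ := by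
  have hcomm : ⟪Z, U⟫ = ⟪U, Z⟫ := real_inner_comm U Z
  have key : 0 < ε * (r2 - ⟪U, Z⟫) := mul_pos hε (by linarith)
  rw [inner_sub_left, inner_sub_right, inner_sub_right, real_inner_smul_right,
    real_inner_smul_right, hu, hz, hcomm]
  linarith [key]

lemma face_lemma (c : E3) (r2 : ℝ) (hr2 : 0 < r2) (u a b : E3)
    (hu : ⟪u - c, u - c⟫ = r2) (ha : ⟪a - c, a - c⟫ = r2) (hb : ⟪b - c, b - c⟫ = r2)
    (hua : u ≠ a) (hub : u ≠ b)
    (hli : LinearIndependent ℝ ![u - c, a - c, b - c])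
    (hacA : 0 < ⟪u - a, b - a⟫) (hacB : 0 < ⟪u - b, a - b⟫) :
    ∃ ε₀ > 0, ∀ ε : ℝ, 0 < ε → ε < ε₀ →
      IsWellCenteredTet u a b (c - (1 - ε) • (u - c)) := by
  set U : E3 := u - c with hU
  set A : E3 := a - c with hA
  set B : E3 := b - c with hB
  clear_value U A B
  set a' : ℝ := ⟪U, A⟫ with ha'
  set b' : ℝ := ⟪U, B⟫ with hb'
  set e' : ℝ := ⟪A, B⟫ with he'
  clear_value a' b' e'
  have haU : ⟪A, U⟫ = a' := by rw [ha', real_inner_comm]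
  have hbU : ⟪B, U⟫ = b' := by rw [hb', real_inner_comm]
  have heA : ⟪B, A⟫ = e' := by rw [he', real_inner_comm]
  have hUA : a' < r2 := by
    have h2 : (0:ℝ) < ⟪U - A, U - A⟫ := by
      apply inner_self_pos'
      rw [hU, hA]
      rw [sub_sub_sub_cancel_right]
      exact sub_ne_zero.mpr hua
    rw [inner_sub_sub_self, hu, ha, ← ha', haU] at h2
    linarith
  have hUB : b' < r2 := by
    have h2 : (0:ℝ) < ⟪U - B, U - B⟫ := by
      apply inner_self_pos'
      rw [hU, hB, sub_sub_sub_cancel_right]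
      exact sub_ne_zero.mpr hub
    rw [inner_sub_sub_self, hu, hb, ← hb', hbU] at h2
    linarith
  have hacA' : 0 < r2 + b' - a' - e' := by
    have h1 : u - a = U - A := by rw [hU, hA, sub_sub_sub_cancel_right]
    have h2 : b - a = B - A := by rw [hB, hA, sub_sub_sub_cancel_right]
    rw [h1, h2] at hacA
    have h3 : ⟪U - A, B - A⟫ = ⟪U, B⟫ - ⟪U, A⟫ - ⟪A, B⟫ + ⟪A, A⟫ := by
      rw [inner_sub_left, inner_sub_right, inner_sub_right]; ring
    rw [h3, ha, ← ha', ← hb', ← he'] at hacA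
    linarith
  have hacB' : 0 < r2 + a' - b' - e' := by
    have h1 : u - b = U - B := by rw [hU, hB, sub_sub_sub_cancel_right]
    have h2 : a - b = A - B := by rw [hA, hB, sub_sub_sub_cancel_right]
    rw [h1, h2] at hacB
    have h3 : ⟪U - B, A - B⟫ = ⟪U, A⟫ - ⟪U, B⟫ - ⟪B, A⟫ + ⟪B, B⟫ := by
      rw [inner_sub_left, inner_sub_right, inner_sub_right]; ring
    rw [h3, hb, ← ha', ← hb', heA] at hacB
    linarith
  set Np : ℝ := (r2 - e') * (r2 + e' - a' - b') with hNp
  set Nq : ℝ := (r2 - b') * (r2 + b' - a' - e') with hNq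
  set Nr : ℝ := (r2 - a') * (r2 + a' - b' - e') with hNr
  set D : ℝ := r2 * (r2 * r2 - e' * e') - a' * (a' * r2 - e' * b') + b' * (a' * e' - r2 * b')
    with hD
  have hDpos : 0 < D := gram_pos U A B hli r2 a' b' e' hu ha hb ha'.symm hb'.symm he'.symm
  have hNqpos : 0 < Nq := mul_pos (by linarith) hacA'
  have hNrpos : 0 < Nr := mul_pos (by linarith) hacB'
  set x₀ : E3 := Np • U + Nq • A + Nr • B with hx₀
  have cU : ⟪x₀, U⟫ = D := by
    rw [hx₀, inner_add_left, inner_add_left, real_inner_smul_left, real_inner_smul_left,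
      real_inner_smul_left, hu, haU, hbU, hD, hNp, hNq, hNr]
    ring
  have cA : ⟪x₀, A⟫ = D := by
    rw [hx₀, inner_add_left, inner_add_left, real_inner_smul_left, real_inner_smul_left,
      real_inner_smul_left, ha, ← ha', heA, hD, hNp, hNq, hNr]
    ring
  have cB : ⟪x₀, B⟫ = D := by
    rw [hx₀, inner_add_left, inner_add_left, real_inner_smul_left, real_inner_smul_left,
      real_inner_smul_left, hb, ← hb', ← he', hD, hNp, hNq, hNr]
    ring
  have cU' : ⟪U, x₀⟫ = D := by rw [real_inner_comm]; exact cU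
  have cA' : ⟪A, x₀⟫ = D := by rw [real_inner_comm]; exact cA
  have cB' : ⟪B, x₀⟫ = D := by rw [real_inner_comm]; exact cB
  set X : ℝ := ⟪x₀, x₀⟫ with hX
  set P : ℝ := r2 * Np / (2 * D) with hP
  set Q : ℝ := r2 * Nq / (2 * D) with hQ
  set R' : ℝ := r2 * Nr / (2 * D) with hR'
  have hQpos : 0 < Q := by rw [hQ]; positivity
  have hRpos : 0 < R' := by rw [hR']; positivity
  have hPQR : P + Q + R' = r2 * (Np + Nq + Nr) / (2 * D) := by
    rw [hP, hQ, hR']; field_simp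
  clear_value Np Nq Nr D X
  clear_value P Q R'
  refine ⟨min (1/2) (1 / (1 + 2 * (Q + R') + |P + Q + R'|)), by positivity, ?_⟩
  intro ε hε0 hεlt
  have hε2 : ε < 1/2 := lt_of_lt_of_le hεlt (min_le_left _ _)
  have hεS : ε * (1 + 2 * (Q + R') + |P + Q + R'|) < 1 := by
    have h1 : (0:ℝ) < 1 + 2 * (Q + R') + |P + Q + R'| := by positivity
    have h2 := lt_of_lt_of_le hεlt (min_le_right _ _)
    rw [lt_div_iff₀ h1] at h2
    linarith
  have habsS : P + Q + R' ≤ |P + Q + R'| := le_abs_self _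
  have habsS' : -|P + Q + R'| ≤ P + Q + R' := neg_abs_le _
  set v₁ : E3 := c - (1 - ε) • U with hv₁
  -- affine independence of the new tetrahedron
  have haffi : AffineIndependent ℝ ![u, a, b, v₁] := by
    apply affineIndependent4_of_li
    have e1 : a - u = A - U := by rw [hU, hA, sub_sub_sub_cancel_right]
    have e2 : b - u = B - U := by rw [hU, hB, sub_sub_sub_cancel_right]
    have e3 : v₁ - u = -((2 - ε) • U) := by
      rw [hv₁]
      have : u = U + c := by rw [hU]; abel
      rw [this]
      module
    rw [e1, e2, e3, Fintype.linearIndependent_iff]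
    intro g hg
    rw [Fin.sum_univ_three] at hg
    simp only [Matrix.cons_val_zero, Matrix.cons_val_one, Matrix.head_cons,
      Matrix.cons_val_two, Matrix.tail_cons] at hg
    have hg' : (-(g 0) - g 1 - (2 - ε) * g 2) • U + g 0 • A + g 1 • B = 0 := by
      linear_combination (norm := module) hg
    have hz := Fintype.linearIndependent_iff.mp hli
      ![-(g 0) - g 1 - (2 - ε) * g 2, g 0, g 1] (by
        rw [Fin.sum_univ_three]
        simpa using hg')
    have h0 := hz 0
    have h1 := hz 1
    have h2 := hz 2
    simp only [Matrix.cons_val_zero, Matrix.cons_val_one, Matrix.head_cons,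
      Matrix.cons_val_two, Matrix.tail_cons] at h0 h1 h2
    intro i
    fin_cases i
    · exact h1
    · exact h2
    · rw [h1, h2] at h0
      have h2ε : (2:ℝ) - ε ≠ 0 := by linarith
      have ht : (2 - ε) * g 2 = 0 := by linarith
      rcases mul_eq_zero.mp ht with h | h
      · exact absurd h h2ε
      · exact h
  -- the weights
  set w3 : ℝ := (1 - ε * (P + Q + R')) / (2 - ε) with hw3
  set W : Fin 4 → ℝ := ![1 - ε * Q - ε * R' - w3, ε * Q, ε * R', w3] with hW
  have h2ε : (0:ℝ) < 2 - ε := by linarith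
  have hWsum : ∑ i, W i = 1 := by
    rw [Fin.sum_univ_four]
    simp only [hW, Matrix.cons_val_zero, Matrix.cons_val_one, Matrix.head_cons,
      Matrix.cons_val_two, Matrix.tail_cons, Matrix.cons_val_three]
    ring
  have k1 : ε * (P + Q + R') ≤ ε * (1 + 2 * (Q + R') + |P + Q + R'|) :=
    mul_le_mul_of_nonneg_left (by linarith) hε0.le
  have k2 : ε * (1 + Q + R' - P) ≤ ε * (1 + 2 * (Q + R') + |P + Q + R'|) :=
    mul_le_mul_of_nonneg_left (by linarith) hε0.le
  have k3 : 0 ≤ ε * ε * Q := mul_nonneg (mul_nonneg hε0.le hε0.le) hQpos.le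
  have k4 : 0 ≤ ε * ε * R' := mul_nonneg (mul_nonneg hε0.le hε0.le) hRpos.le
  have hw3pos : 0 < w3 := by
    rw [hw3]
    apply div_pos _ h2ε
    linarith [k1, hεS]
  have hw0pos : 0 < 1 - ε * Q - ε * R' - w3 := by
    rw [hw3, sub_pos, div_lt_iff₀ h2ε]
    have key : (1 - ε * Q - ε * R') * (2 - ε) - (1 - ε * (P + Q + R'))
        = (1 - ε * (1 + Q + R' - P)) + (ε * ε * Q + ε * ε * R') := by ring
    linarith [k2, k3, k4, hεS, key]
  have hWpos : ∀ i, 0 < W i := by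
    intro i
    fin_cases i
    · simpa [hW] using hw0pos
    · simpa [hW] using mul_pos hε0 hQpos
    · simpa [hW] using mul_pos hε0 hRpos
    · simpa [hW] using hw3pos
  -- the circumcenter candidate
  set pε : E3 := c + (ε * r2 / (2 * D)) • x₀ with hpε
  have hDne : D ≠ 0 := ne_of_gt hDpos
  set T : Affine.Simplex ℝ E3 3 := ⟨![u, a, b, v₁], haffi⟩ with hT
  have hTpoints : T.points = ![u, a, b, v₁] := rfl
  have hcomb : Finset.univ.affineCombination ℝ T.points W = pε := by
    rw [hTpoints, Finset.affineCombination_eq_linear_combination _ _ _ hWsum, Fin.sum_univ_four]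
    simp only [hW, Matrix.cons_val_zero, Matrix.cons_val_one, Matrix.head_cons,
      Matrix.cons_val_two, Matrix.tail_cons, Matrix.cons_val_three]
    rw [hpε, hx₀, hv₁, hw3]
    have hu' : u = U + c := by rw [hU]; abel
    have ha' : a = A + c := by rw [hA]; abel
    have hb' : b = B + c := by rw [hB]; abel
    rw [hu', ha', hb']
    have h2εne : (2:ℝ) - ε ≠ 0 := ne_of_gt h2ε
    rw [hP, hQ, hR']
    match_scalars <;> (field_simp; try ring)
  -- distances
  set s' : ℝ := ε * r2 / (2 * D) with hs'
  set ρ : ℝ := Real.sqrt (r2 - ε * r2 + s' ^ 2 * X) with hρ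
  have d0 : dist u pε = ρ := by
    rw [dist_eq_norm, norm_eq_sqrt_real_inner, hρ]
    congr 1
    have e1 : u - pε = U - s' • x₀ := by rw [hpε, hU, hs']; abel
    rw [e1, inner_sub_sub_self]
    simp only [real_inner_smul_left, real_inner_smul_right]
    rw [hu, cU, cU', ← hX, hs']
    field_simp
    ring
  have d1 : dist a pε = ρ := by
    rw [dist_eq_norm, norm_eq_sqrt_real_inner, hρ]
    congr 1
    have e1 : a - pε = A - s' • x₀ := by rw [hpε, hA, hs']; abel
    rw [e1, inner_sub_sub_self]
    simp only [real_inner_smul_left, real_inner_smul_right]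
    rw [ha, cA, cA', ← hX, hs']
    field_simp
    ring
  have d2 : dist b pε = ρ := by
    rw [dist_eq_norm, norm_eq_sqrt_real_inner, hρ]
    congr 1
    have e1 : b - pε = B - s' • x₀ := by rw [hpε, hB, hs']; abel
    rw [e1, inner_sub_sub_self]
    simp only [real_inner_smul_left, real_inner_smul_right]
    rw [hb, cB, cB', ← hX, hs']
    field_simp
    ring
  have d3 : dist v₁ pε = ρ := by
    rw [dist_eq_norm, norm_eq_sqrt_real_inner, hρ]
    congr 1
    have e1 : v₁ - pε = (-(1 - ε)) • U - s' • x₀ := by rw [hpε, hv₁, hs']; module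
    rw [e1, inner_sub_sub_self]
    simp only [real_inner_smul_left, real_inner_smul_right]
    rw [hu, cU, cU', ← hX, hs']
    field_simp
    ring
  have hdist : ∀ i, dist (T.points i) pε = ρ := by
    intro i
    fin_cases i
    · exact d0
    · exact d1
    · exact d2
    · exact d3
  have hmem : pε ∈ affineSpan ℝ (Set.range T.points) := by
    rw [← hcomb]
    exact affineCombination_mem_affineSpan hWsum T.points
  have hcc : pε = T.circumcenter := T.eq_circumcenter_of_dist_eq hmem fun i => hdist i
  exact ⟨haffi, W, hWsum, hWpos, by rw [hcomb, hcc]⟩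


/-- If the tetrahedron `[u v₂ v₃ v₄]` is 3-well-centered and all six face angles
`∠ u vᵢ vⱼ` (`i ≠ j ∈ {2,3,4}`) are acute, then there is a point `v₁` such that the
three tetrahedra `[u v₂ v₃ v₁]`, `[u v₃ v₄ v₁]`, `[u v₄ v₂ v₁]` are nondegenerate and
3-well-centered, and the face angles `∠ u v₁ vᵢ` and `∠ u vᵢ v₁` are acute for
`i ∈ {2,3,4}`. -/
theorem exists_insert_degree_three_vertex
    (u v₂ v₃ v₄ : E3)
    (h : AffineIndependent ℝ ![u, v₂, v₃, v₄])
    (hwc : (⟨![u, v₂, v₃, v₄], h⟩ : Affine.Simplex ℝ E3 3).IsWellCentered)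
    (a23 : angle u v₂ v₃ < Real.pi / 2) (a24 : angle u v₂ v₄ < Real.pi / 2)
    (a32 : angle u v₃ v₂ < Real.pi / 2) (a34 : angle u v₃ v₄ < Real.pi / 2)
    (a42 : angle u v₄ v₂ < Real.pi / 2) (a43 : angle u v₄ v₃ < Real.pi / 2) :
    ∃ v₁ : E3,
      IsWellCenteredTet u v₂ v₃ v₁ ∧
      IsWellCenteredTet u v₃ v₄ v₁ ∧
      IsWellCenteredTet u v₄ v₂ v₁ ∧
      (angle u v₁ v₂ < Real.pi / 2 ∧ angle u v₂ v₁ < Real.pi / 2) ∧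
      (angle u v₁ v₃ < Real.pi / 2 ∧ angle u v₃ v₁ < Real.pi / 2) ∧
      (angle u v₁ v₄ < Real.pi / 2 ∧ angle u v₄ v₁ < Real.pi / 2) := by
  classical
  set σ : Affine.Simplex ℝ E3 3 := ⟨![u, v₂, v₃, v₄], h⟩ with hσ
  set c : E3 := σ.circumcenter with hc
  set R : ℝ := σ.circumradius with hR
  -- distinctness of points
  have hinj := h.injective
  have hne : ∀ (i j : Fin 4), i ≠ j → ![u, v₂, v₃, v₄] i ≠ ![u, v₂, v₃, v₄] j := by
    intro i j hij he
    exact hij (hinj he)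
  have h01 : u ≠ v₂ := hne 0 1 (by decide)
  have h02 : u ≠ v₃ := hne 0 2 (by decide)
  have h03 : u ≠ v₄ := hne 0 3 (by decide)
  have h12 : v₂ ≠ v₃ := hne 1 2 (by decide)
  have h13 : v₂ ≠ v₄ := hne 1 3 (by decide)
  have h23 : v₃ ≠ v₄ := hne 2 3 (by decide)
  -- distances to the circumcenter
  have hdc : ∀ i, dist (![u, v₂, v₃, v₄] i) c = R := fun i =>
    σ.dist_circumcenter_eq_circumradius i
  have hdu : dist u c = R := hdc 0
  have hd2 : dist v₂ c = R := hdc 1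
  have hd3 : dist v₃ c = R := hdc 2
  have hd4 : dist v₄ c = R := hdc 3
  have hRpos : 0 < R := by
    rcases lt_or_eq_of_le (dist_nonneg.trans hdu.le) with h' | h'
    · exact h'
    · exfalso
      apply h01
      have e1 : dist u c = 0 := by rw [hdu, ← h']
      have e2 : dist v₂ c = 0 := by rw [hd2, ← h']
      rw [dist_eq_zero] at e1 e2
      rw [e1, e2]
  set r2 : ℝ := R ^ 2 with hr2def
  have hr2 : 0 < r2 := by rw [hr2def]; positivity
  have hinner : ∀ z : E3, dist z c = R → ⟪z - c, z - c⟫ = r2 := by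
    intro z hz
    rw [real_inner_self_eq_norm_sq, ← dist_eq_norm, hz, hr2def]
  have hu : ⟪u - c, u - c⟫ = r2 := hinner u hdu
  have hv2 : ⟪v₂ - c, v₂ - c⟫ = r2 := hinner v₂ hd2
  have hv3 : ⟪v₃ - c, v₃ - c⟫ = r2 := hinner v₃ hd3
  have hv4 : ⟪v₄ - c, v₄ - c⟫ = r2 := hinner v₄ hd4
  -- the positive barycentric weights of the circumcenter
  obtain ⟨lam, hlsum, hlpos, hlcomb⟩ := hwc
  have hlcomb' : Finset.univ.affineCombination ℝ ![u, v₂, v₃, v₄] lam = c := hlcomb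
  have hlin : lam 0 • u + lam 1 • v₂ + lam 2 • v₃ + lam 3 • v₄ = c := by
    rw [← hlcomb', Finset.affineCombination_eq_linear_combination _ _ _ hlsum,
      Fin.sum_univ_four]
    simp
  have hlsum' : lam 0 + lam 1 + lam 2 + lam 3 = 1 := by
    rw [← hlsum, Fin.sum_univ_four]
  -- linear independence for the three faces
  have hli1 : LinearIndependent ℝ ![u - c, v₂ - c, v₃ - c] := by
    have := aux_li ![u, v₂, v₃, v₄] h lam hlsum (ne_of_gt (hlpos 3)) hlcomb'
    simpa using this
  have hperm2 : AffineIndependent ℝ ![u, v₃, v₄, v₂] := by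
    let e : Fin 4 ≃ Fin 4 := ⟨![0, 2, 3, 1], ![0, 3, 1, 2], by decide, by decide⟩
    have := h.comp_embedding e.toEmbedding
    have heq : ![u, v₂, v₃, v₄] ∘ ⇑e.toEmbedding = ![u, v₃, v₄, v₂] := by
      funext i; fin_cases i <;> rfl
    rwa [heq] at this
  have hli2 : LinearIndependent ℝ ![u - c, v₃ - c, v₄ - c] := by
    have hw2sum : ∑ i, (![lam 0, lam 2, lam 3, lam 1] : Fin 4 → ℝ) i = 1 := by
      rw [Fin.sum_univ_four]; simp; linarith [hlsum']
    have hcomb2 : Finset.univ.affineCombination ℝ ![u, v₃, v₄, v₂]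
        ![lam 0, lam 2, lam 3, lam 1] = c := by
      rw [Finset.affineCombination_eq_linear_combination _ _ _ hw2sum, Fin.sum_univ_four]
      simp only [Matrix.cons_val_zero, Matrix.cons_val_one, Matrix.head_cons,
        Matrix.cons_val_two, Matrix.tail_cons, Matrix.cons_val_three]
      linear_combination (norm := module) hlin
    have := aux_li ![u, v₃, v₄, v₂] hperm2 ![lam 0, lam 2, lam 3, lam 1] hw2sum
      (by simpa using ne_of_gt (hlpos 1)) hcomb2
    simpa using this
  have hperm3 : AffineIndependent ℝ ![u, v₄, v₂, v₃] := by
    let e : Fin 4 ≃ Fin 4 := ⟨![0, 3, 1, 2], ![0, 2, 3, 1], by decide, by decide⟩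
    have := h.comp_embedding e.toEmbedding
    have heq : ![u, v₂, v₃, v₄] ∘ ⇑e.toEmbedding = ![u, v₄, v₂, v₃] := by
      funext i; fin_cases i <;> rfl
    rwa [heq] at this
  have hli3 : LinearIndependent ℝ ![u - c, v₄ - c, v₂ - c] := by
    have hw3sum : ∑ i, (![lam 0, lam 3, lam 1, lam 2] : Fin 4 → ℝ) i = 1 := by
      rw [Fin.sum_univ_four]; simp; linarith [hlsum']
    have hcomb3 : Finset.univ.affineCombination ℝ ![u, v₄, v₂, v₃]
        ![lam 0, lam 3, lam 1, lam 2] = c := by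
      rw [Finset.affineCombination_eq_linear_combination _ _ _ hw3sum, Fin.sum_univ_four]
      simp only [Matrix.cons_val_zero, Matrix.cons_val_one, Matrix.head_cons,
        Matrix.cons_val_two, Matrix.tail_cons, Matrix.cons_val_three]
      linear_combination (norm := module) hlin
    have := aux_li ![u, v₄, v₂, v₃] hperm3 ![lam 0, lam 3, lam 1, lam 2] hw3sum
      (by simpa using ne_of_gt (hlpos 2)) hcomb3
    simpa using this
  -- inner-product versions of the acute-angle hypotheses
  have hin23 : 0 < ⟪u - v₂, v₃ - v₂⟫ :=
    inner_pos_of_angle_lt (sub_ne_zero.mpr h01) (sub_ne_zero.mpr (Ne.symm h12)) a23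
  have hin24 : 0 < ⟪u - v₂, v₄ - v₂⟫ :=
    inner_pos_of_angle_lt (sub_ne_zero.mpr h01) (sub_ne_zero.mpr (Ne.symm h13)) a24
  have hin32 : 0 < ⟪u - v₃, v₂ - v₃⟫ :=
    inner_pos_of_angle_lt (sub_ne_zero.mpr h02) (sub_ne_zero.mpr h12) a32
  have hin34 : 0 < ⟪u - v₃, v₄ - v₃⟫ :=
    inner_pos_of_angle_lt (sub_ne_zero.mpr h02) (sub_ne_zero.mpr (Ne.symm h23)) a34
  have hin42 : 0 < ⟪u - v₄, v₂ - v₄⟫ :=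
    inner_pos_of_angle_lt (sub_ne_zero.mpr h03) (sub_ne_zero.mpr h13) a42
  have hin43 : 0 < ⟪u - v₄, v₃ - v₄⟫ :=
    inner_pos_of_angle_lt (sub_ne_zero.mpr h03) (sub_ne_zero.mpr h23) a43
  -- apply the face lemma to the three faces
  obtain ⟨ε₁, hε₁, H1⟩ := face_lemma c r2 hr2 u v₂ v₃ hu hv2 hv3 h01 h02 hli1 hin23 hin32
  obtain ⟨ε₂, hε₂, H2⟩ := face_lemma c r2 hr2 u v₃ v₄ hu hv3 hv4 h02 h03 hli2 hin34 hin43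
  obtain ⟨ε₃, hε₃, H3⟩ := face_lemma c r2 hr2 u v₄ v₂ hu hv4 hv2 h03 h01 hli3 hin42 hin24
  -- bounds coming from `⟪u - c, vᵢ - c⟫ > -r2`
  have hlow : ∀ z : E3, (u - c) + (z - c) ≠ 0 → ⟪z - c, z - c⟫ = r2 →
      -r2 < ⟪u - c, z - c⟫ := by
    intro z hz hzr
    have h2 : (0:ℝ) < ⟪(u - c) + (z - c), (u - c) + (z - c)⟫ := inner_self_pos' hz
    rw [inner_add_add_self, hu, hzr] at h2
    linarith [h2, real_inner_comm (z - c) (u - c)]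
  have hne2 : (u - c) + (v₂ - c) ≠ 0 := by
    intro h0
    have := Fintype.linearIndependent_iff.mp hli1 ![1, 1, 0] (by
      rw [Fin.sum_univ_three]; simpa using h0) 0
    simpa using this
  have hne3 : (u - c) + (v₃ - c) ≠ 0 := by
    intro h0
    have := Fintype.linearIndependent_iff.mp hli1 ![1, 0, 1] (by
      rw [Fin.sum_univ_three]; simpa using h0) 0
    simpa using this
  have hne4 : (u - c) + (v₄ - c) ≠ 0 := by
    intro h0
    have := Fintype.linearIndependent_iff.mp hli2 ![1, 0, 1] (by
      rw [Fin.sum_univ_three]; simpa using h0) 0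
    simpa using this
  have hlow2 : -r2 < ⟪u - c, v₂ - c⟫ := hlow v₂ hne2 hv2
  have hlow3 : -r2 < ⟪u - c, v₃ - c⟫ := hlow v₃ hne3 hv3
  have hlow4 : -r2 < ⟪u - c, v₄ - c⟫ := hlow v₄ hne4 hv4
  have hup : ∀ z : E3, u ≠ z → ⟪z - c, z - c⟫ = r2 → ⟪u - c, z - c⟫ < r2 := by
    intro z hz hzr
    have h2 : (0:ℝ) < ⟪(u - c) - (z - c), (u - c) - (z - c)⟫ := by
      apply inner_self_pos'
      rw [sub_sub_sub_cancel_right]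
      exact sub_ne_zero.mpr hz
    rw [inner_sub_sub_self, hu, hzr] at h2
    linarith [h2, real_inner_comm (z - c) (u - c)]
  have hup2 : ⟪u - c, v₂ - c⟫ < r2 := hup v₂ h01 hv2
  have hup3 : ⟪u - c, v₃ - c⟫ < r2 := hup v₃ h02 hv3
  have hup4 : ⟪u - c, v₄ - c⟫ < r2 := hup v₄ h03 hv4
  -- choice of ε
  set δ₂ : ℝ := (r2 + ⟪u - c, v₂ - c⟫) / r2 with hδ₂
  set δ₃ : ℝ := (r2 + ⟪u - c, v₃ - c⟫) / r2 with hδ₃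
  set δ₄ : ℝ := (r2 + ⟪u - c, v₄ - c⟫) / r2 with hδ₄
  have hδ₂pos : 0 < δ₂ := div_pos (by linarith) hr2
  have hδ₃pos : 0 < δ₃ := div_pos (by linarith) hr2
  have hδ₄pos : 0 < δ₄ := div_pos (by linarith) hr2
  set m : ℝ := min 1 (min ε₁ (min ε₂ (min ε₃ (min δ₂ (min δ₃ δ₄))))) with hm
  have hmpos : 0 < m := by
    rw [hm]
    simp only [lt_min_iff]
    exact ⟨one_pos, hε₁, hε₂, hε₃, hδ₂pos, hδ₃pos, hδ₄pos⟩
  set ε : ℝ := m / 2 with hε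
  have hεpos : 0 < ε := by rw [hε]; positivity
  have hεm : ε < m := by rw [hε]; linarith
  have hεlt1 : ε < 1 := lt_of_lt_of_le hεm (by rw [hm]; exact min_le_left _ _)
  have hεlt₁ : ε < ε₁ := lt_of_lt_of_le hεm (by
    rw [hm]; exact le_trans (min_le_right _ _) (min_le_left _ _))
  have hεlt₂ : ε < ε₂ := lt_of_lt_of_le hεm (by
    rw [hm]
    exact le_trans (min_le_right _ _) (le_trans (min_le_right _ _) (min_le_left _ _)))
  have hεlt₃ : ε < ε₃ := lt_of_lt_of_le hεm (by
    rw [hm]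
    exact le_trans (min_le_right _ _) (le_trans (min_le_right _ _)
      (le_trans (min_le_right _ _) (min_le_left _ _))))
  have hεltδ₂ : ε < δ₂ := lt_of_lt_of_le hεm (by
    rw [hm]
    exact le_trans (min_le_right _ _) (le_trans (min_le_right _ _)
      (le_trans (min_le_right _ _) (le_trans (min_le_right _ _) (min_le_left _ _)))))
  have hεltδ₃ : ε < δ₃ := lt_of_lt_of_le hεm (by
    rw [hm]
    exact le_trans (min_le_right _ _) (le_trans (min_le_right _ _)
      (le_trans (min_le_right _ _) (le_trans (min_le_right _ _)
        (le_trans (min_le_right _ _) (min_le_left _ _))))))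
  have hεltδ₄ : ε < δ₄ := lt_of_lt_of_le hεm (by
    rw [hm]
    exact le_trans (min_le_right _ _) (le_trans (min_le_right _ _)
      (le_trans (min_le_right _ _) (le_trans (min_le_right _ _)
        (le_trans (min_le_right _ _) (min_le_right _ _))))))
  have h2ε : (0:ℝ) < 2 - ε := by linarith
  set v₁ : E3 := c - (1 - ε) • (u - c) with hv₁
  -- the two kinds of angle goals
  have hangleA : ∀ z : E3, ε * r2 < r2 + ⟪u - c, z - c⟫ →
      angle u v₁ z < Real.pi / 2 := by
    intro z hεr
    rw [eangle_eq]
    apply angle_lt_of_inner_pos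
    have e1 : u - v₁ = (2 - ε) • (u - c) := by rw [hv₁]; module
    have e2 : z - v₁ = (z - c) + (1 - ε) • (u - c) := by rw [hv₁]; module
    rw [e1, e2]
    exact angleA_inner _ _ r2 ε hu h2ε hεr
  have hangleB : ∀ z : E3, ⟪z - c, z - c⟫ = r2 → ⟪u - c, z - c⟫ < r2 →
      angle u z v₁ < Real.pi / 2 := by
    intro z hzr hzu
    rw [eangle_eq]
    apply angle_lt_of_inner_pos
    have e1 : u - z = (u - c) - (z - c) := by module
    have e2 : v₁ - z = (-(1 - ε)) • (u - c) - (z - c) := by rw [hv₁]; module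
    rw [e1, e2]
    exact angleB_inner _ _ r2 ε hu hzr hzu hεpos
  exact ⟨v₁, H1 ε hεpos hεlt₁, H2 ε hεpos hεlt₂, H3 ε hεpos hεlt₃,
    ⟨hangleA v₂ ((lt_div_iff₀ hr2).mp hεltδ₂), hangleB v₂ hv2 hup2⟩,
    ⟨hangleA v₃ ((lt_div_iff₀ hr2).mp hεltδ₃), hangleB v₃ hv3 hup3⟩,
    ⟨hangleA v₄ ((lt_div_iff₀ hr2).mp hεltδ₄), hangleB v₄ hv4 hup4⟩⟩


end
end

section
/- Let p ∈ ℝ³ and let a, b, c be nonzero, pairwise orthogonal vectors in ℝ³. Then the cube-corner tetrahedron with vertices p, p + a, p + b, p + c (which is a nondegenerate tetrahedron) is not 3-well-centered. -/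
open scoped RealInnerProductSpace
open Finset

noncomputable section

/-- A cube-corner tetrahedron — one whose vertices are `p, p + a, p + b, p + c` with
`a, b, c` nonzero and pairwise orthogonal — is a nondegenerate tetrahedron and is
not 3-well-centered. -/
theorem cubeCorner_not_isWellCentered
    (p a b c : E3) (ha : a ≠ 0) (hb : b ≠ 0) (hc : c ≠ 0)
    (hab : ⟪a, b⟫ = 0) (hac : ⟪a, c⟫ = 0) (hbc : ⟪b, c⟫ = 0) :
    AffineIndependent ℝ ![p, p + a, p + b, p + c] ∧
    ∀ h : AffineIndependent ℝ ![p, p + a, p + b, p + c],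
      ¬(⟨![p, p + a, p + b, p + c], h⟩ : Affine.Simplex ℝ E3 3).IsWellCentered := by
  have hba : ⟪b, a⟫ = 0 := by rw [real_inner_comm]; exact hab
  have hca : ⟪c, a⟫ = 0 := by rw [real_inner_comm]; exact hac
  have hcb : ⟪c, b⟫ = 0 := by rw [real_inner_comm]; exact hbc
  have ia : ⟪a, a⟫ ≠ 0 := inner_self_ne_zero.mpr ha
  have ib : ⟪b, b⟫ ≠ 0 := inner_self_ne_zero.mpr hb
  have ic : ⟪c, c⟫ ≠ 0 := inner_self_ne_zero.mpr hc
  -- linear independence key fact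
  have key : ∀ x y z : ℝ, x • a + y • b + z • c = 0 → x = 0 ∧ y = 0 ∧ z = 0 := by
    intro x y z h
    have h1 : ⟪a, x • a + y • b + z • c⟫ = x * ⟪a, a⟫ := by
      rw [inner_add_right, inner_add_right, real_inner_smul_right, real_inner_smul_right, real_inner_smul_right, hab, hac]; ring
    have h2 : ⟪b, x • a + y • b + z • c⟫ = y * ⟪b, b⟫ := by
      rw [inner_add_right, inner_add_right, real_inner_smul_right, real_inner_smul_right, real_inner_smul_right, hba, hbc]; ring
    have h3 : ⟪c, x • a + y • b + z • c⟫ = z * ⟪c, c⟫ := by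
      rw [inner_add_right, inner_add_right, real_inner_smul_right, real_inner_smul_right, real_inner_smul_right, hca, hcb]; ring
    rw [h, inner_zero_right] at h1 h2 h3
    exact ⟨by
      have := h1.symm
      exact (mul_eq_zero.mp this).resolve_right ia, by
      exact (mul_eq_zero.mp h2.symm).resolve_right ib, by
      exact (mul_eq_zero.mp h3.symm).resolve_right ic⟩
  set P : Fin 4 → E3 := ![p, p + a, p + b, p + c] with hP
  have hvsub : ∀ w : Fin 4 → ℝ, Finset.univ.weightedVSubOfPoint P p w
      = w 1 • a + w 2 • b + w 3 • c := by
    intro w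
    simp [Finset.weightedVSubOfPoint_apply, Fin.sum_univ_four, hP]
  have hAI : AffineIndependent ℝ P := by
    rw [affineIndependent_iff_of_fintype]
    intro w hw hws
    rw [Finset.weightedVSub_eq_weightedVSubOfPoint_of_sum_eq_zero _ w P hw p, hvsub] at hws
    obtain ⟨h1, h2, h3⟩ := key _ _ _ hws
    intro i
    fin_cases i
    · have := hw
      rw [Fin.sum_univ_four, h1, h2, h3] at this
      simpa using this
    · exact h1
    · exact h2
    · exact h3
  refine ⟨hAI, ?_⟩
  intro h ⟨w, hw1, hwpos, hweq⟩
  -- the circumcenter is p + (1/2) • (a + b + c)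
  set q : E3 := p + (1/2 : ℝ) • (a + b + c) with hq
  set S : Affine.Simplex ℝ E3 3 := ⟨P, h⟩ with hS
  have hqspan : q ∈ affineSpan ℝ (Set.range S.points) := by
    have : q = Finset.univ.affineCombination ℝ P ![-(1/2 : ℝ), 1/2, 1/2, 1/2] := by
      rw [Finset.affineCombination_eq_weightedVSubOfPoint_vadd_of_sum_eq_one _ _ _
        (by simp [Fin.sum_univ_four]; ring) p, hvsub]
      simp [hq]
      module
    rw [this]
    exact affineCombination_mem_affineSpan (by simp [Fin.sum_univ_four]; ring) P
  have hdist : ∀ i, dist (S.points i) q = ‖(1/2 : ℝ) • (a + b + c)‖ := by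
    have hn : ∀ v : E3, ⟪v, a + b + c⟫ = ⟪v, v⟫ →
        ‖v - (1/2 : ℝ) • (a + b + c)‖ = ‖(1/2 : ℝ) • (a + b + c)‖ := by
      intro v hv
      have h2 : ‖v - (1/2 : ℝ) • (a + b + c)‖ ^ 2 = ‖(1/2 : ℝ) • (a + b + c)‖ ^ 2 := by
        rw [norm_sub_sq_real, real_inner_smul_right, hv, real_inner_self_eq_norm_sq]
        ring
      rw [← Real.sqrt_sq (norm_nonneg (v - (1/2 : ℝ) • (a + b + c))),
        ← Real.sqrt_sq (norm_nonneg ((1/2 : ℝ) • (a + b + c))), h2]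
    intro i
    fin_cases i <;> simp only [hS, hP, hq, Matrix.cons_val_zero, Matrix.cons_val_one,
      Matrix.head_cons, Fin.mk_zero, Fin.mk_one]
    · rw [dist_eq_norm, show p - (p + (1/2 : ℝ) • (a + b + c))
        = -((1/2 : ℝ) • (a + b + c)) from by abel, norm_neg]
    · rw [dist_add_left, dist_eq_norm]
      exact hn a (by rw [inner_add_right, inner_add_right, hab, hac]; ring)
    · show dist (p + b) (p + (1/2 : ℝ) • (a + b + c)) = ‖(1/2 : ℝ) • (a + b + c)‖
      rw [dist_add_left, dist_eq_norm]
      exact hn b (by rw [inner_add_right, inner_add_right, hba, hbc]; ring)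
    · show dist (p + c) (p + (1/2 : ℝ) • (a + b + c)) = ‖(1/2 : ℝ) • (a + b + c)‖
      rw [dist_add_left, dist_eq_norm]
      exact hn c (by rw [inner_add_right, inner_add_right, hca, hcb]; ring)
  have hcc : q = S.circumcenter := S.eq_circumcenter_of_dist_eq hqspan hdist
  -- now derive the contradiction
  have hcomb : Finset.univ.affineCombination ℝ S.points w = p + (w 1 • a + w 2 • b + w 3 • c) := by
    rw [Finset.affineCombination_eq_weightedVSubOfPoint_vadd_of_sum_eq_one _ _ _ hw1 p]
    rw [show S.points = P from rfl, hvsub]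
    simp only [vadd_eq_add]
    abel
  rw [hcomb, ← hcc, hq] at hweq
  have hsub : (w 1 - 1/2) • a + (w 2 - 1/2) • b + (w 3 - 1/2) • c = 0 := by
    have h' : w 1 • a + w 2 • b + w 3 • c = (1/2 : ℝ) • (a + b + c) := add_left_cancel hweq
    linear_combination (norm := module) h'
  obtain ⟨h1, h2, h3⟩ := key _ _ _ hsub
  have hw1' : w 1 = 1/2 := by linarith
  have hw2' : w 2 = 1/2 := by linarith
  have hw3' : w 3 = 1/2 := by linarith
  have : w 0 = -(1/2) := by
    have := hw1
    rw [Fin.sum_univ_four, hw1', hw2', hw3'] at this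
    linarith
  linarith [hwpos 0]

end
end

section
/- Let Q be a plane in ℝ³ and let a, b, w₁, w₂ ∈ Q be such that [abw₁] and [abw₂] are nondegenerate triangles with right angles at w₁ and at w₂ respectively (so that [ab] is the common hypotenuse of both). Let u₁, u₂ be points lying in the same open halfspace bounded by Q, so that σ₁ = [abw₁u₁] and σ₂ = [abw₂u₂] are nondegenerate tetrahedra. Suppose there is a plane S containing both a and b such that σ₁ lies in one closed halfspace bounded by S and σ₂ lies in the other closed halfspace bounded by S. Then σ₁ and σ₂ are not both 3-well-centered. -/
open scoped RealInnerProductSpace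
open Finset

noncomputable section

lemma liDiff3 {a b w u : E3} (h : AffineIndependent ℝ ![a, b, w, u]) {g1 g2 g3 : ℝ}
    (hg : g1 • (b - a) + g2 • (w - a) + g3 • (u - a) = 0) : g1 = 0 ∧ g2 = 0 ∧ g3 = 0 := by
  rw [affineIndependent_iff_of_fintype] at h
  have hs : ∑ i, (![-(g1+g2+g3), g1, g2, g3] : Fin 4 → ℝ) i = 0 := by
    simp [Fin.sum_univ_four]; try ring
  have := h ![-(g1+g2+g3), g1, g2, g3] hs ?_
  · exact ⟨this 1, this 2, this 3⟩
  · rw [Finset.weightedVSub_eq_weightedVSubOfPoint_of_sum_eq_zero _ _ _ hs a,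
      Finset.weightedVSubOfPoint_apply]
    simpa [Fin.sum_univ_four, vsub_eq_sub] using hg


lemma liDiff2 {a b w : E3} (h : AffineIndependent ℝ ![a, b, w]) {g1 g2 : ℝ}
    (hg : g1 • (b - a) + g2 • (w - a) = 0) : g1 = 0 ∧ g2 = 0 := by
  rw [affineIndependent_iff_of_fintype] at h
  have hs : ∑ i, (![-(g1+g2), g1, g2] : Fin 3 → ℝ) i = 0 := by
    simp [Fin.sum_univ_three]; try ring
  have := h ![-(g1+g2), g1, g2] hs ?_
  · exact ⟨this 1, this 2⟩
  · rw [Finset.weightedVSub_eq_weightedVSubOfPoint_of_sum_eq_zero _ _ _ hs a,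
      Finset.weightedVSubOfPoint_apply]
    simpa [Fin.sum_univ_three, vsub_eq_sub] using hg

lemma rep3 {v : Fin 3 → E3} (h : LinearIndependent ℝ v) (x : E3) :
    ∃ c : Fin 3 → ℝ, x = c 0 • v 0 + c 1 • v 1 + c 2 • v 2 := by
  have hc : Fintype.card (Fin 3) = Module.finrank ℝ E3 := by simp
  let b := basisOfLinearIndependentOfCardEqFinrank h hc
  refine ⟨fun i => b.repr x i, ?_⟩
  have := b.sum_repr x
  rw [Fin.sum_univ_three] at this
  simp only [b, coe_basisOfLinearIndependentOfCardEqFinrank] at this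
  exact this.symm

lemma combo_inner {p : Fin 4 → E3} {wt : Fin 4 → ℝ} (hsum : ∑ i, wt i = 1) (z y : E3) :
    ⟪Finset.univ.affineCombination ℝ p wt - z, y⟫ =
      wt 0 * ⟪p 0 - z, y⟫ + wt 1 * ⟪p 1 - z, y⟫ + wt 2 * ⟪p 2 - z, y⟫ + wt 3 * ⟪p 3 - z, y⟫ := by
  have h := Finset.univ.affineCombination_eq_weightedVSubOfPoint_vadd_of_sum_eq_one wt p hsum z
  rw [Finset.weightedVSubOfPoint_apply, Fin.sum_univ_four] at h
  rw [h]
  simp only [vadd_eq_add, vsub_eq_sub, add_sub_cancel_right, inner_add_left, real_inner_smul_left]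

lemma key_geom {q ν a b w : E3} (hν : ν ≠ 0)
    (haQ : ⟪a - q, ν⟫ = 0) (hbQ : ⟪b - q, ν⟫ = 0) (hwQ : ⟪w - q, ν⟫ = 0)
    (htri : AffineIndependent ℝ ![a, b, w])
    (hright : ⟪a - w, b - w⟫ = 0)
    {μ : E3} (hbS : ⟪b - a, μ⟫ = 0)
    {c : E3} (hca : dist a c = dist b c) (hcw : dist a c = dist w c) :
    ⟪c - a, μ⟫ * ‖ν‖^2 = ⟪c - q, ν⟫ * ⟪ν, μ⟫ := by
  have hx : ⟪b - a, ν⟫ = 0 := by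
    have : b - a = (b - q) - (a - q) := by abel
    rw [this, inner_sub_left, haQ, hbQ]; ring
  have hy : ⟪w - a, ν⟫ = 0 := by
    have : w - a = (w - q) - (a - q) := by abel
    rw [this, inner_sub_left, haQ, hwQ]; ring
  set m := midpoint ℝ a b with hm
  have hmab : dist a m = dist b m := by
    rw [hm, dist_left_midpoint, dist_right_midpoint]
  have h1 : ⟪c - m, b - a⟫ = 0 := by
    have := EuclideanGeometry.inner_vsub_vsub_of_dist_eq_of_dist_eq hmab hca
    simpa [vsub_eq_sub] using this
  have hmaw : dist a (midpoint ℝ a w) = dist w (midpoint ℝ a w) := by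
    rw [dist_left_midpoint, dist_right_midpoint]
  have h2 : ⟪c - midpoint ℝ a w, w - a⟫ = 0 := by
    have := EuclideanGeometry.inner_vsub_vsub_of_dist_eq_of_dist_eq hmaw hcw
    simpa [vsub_eq_sub] using this
  have hmid : midpoint ℝ a w - m = (2⁻¹ : ℝ) • (w - b) := by
    rw [hm, midpoint_eq_smul_add, midpoint_eq_smul_add, ← smul_sub]
    congr 1; abel
  have h3 : ⟪c - m, w - a⟫ = 0 := by
    have hsplit : c - m = (c - midpoint ℝ a w) + (midpoint ℝ a w - m) := by abel
    rw [hsplit, inner_add_left, h2, hmid, real_inner_smul_left]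
    have : ⟪w - b, w - a⟫ = ⟪a - w, b - w⟫ := by
      rw [show w - b = -(b - w) by abel, show w - a = -(a - w) by abel,
        inner_neg_neg, real_inner_comm]
    rw [this, hright]; ring
  have li : LinearIndependent ℝ ![ν, b - a, w - a] := by
    rw [Fintype.linearIndependent_iff]
    intro g hg
    rw [Fin.sum_univ_three] at hg
    simp only [Matrix.cons_val_zero, Matrix.cons_val_one, Matrix.head_cons,
      Matrix.cons_val_two, Matrix.tail_cons] at hg
    have h0 : g 0 = 0 := by
      have h' := congrArg (fun v : E3 => ⟪v, ν⟫) hg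
      simp only [inner_add_left, real_inner_smul_left, hx, hy, inner_zero_left] at h'
      have hνν : ⟪ν, ν⟫ ≠ 0 := by
        rw [ne_eq, inner_self_eq_zero]; exact hν
      have : g 0 * ⟪ν, ν⟫ = 0 := by linarith [h']
      exact (mul_eq_zero.mp this).resolve_right hνν
    rw [h0, zero_smul, zero_add] at hg
    obtain ⟨e1, e2⟩ := liDiff2 htri hg
    intro i; fin_cases i <;> simp [h0, e1, e2]
  obtain ⟨t, ht⟩ := rep3 li μ
  simp only [Matrix.cons_val_zero, Matrix.cons_val_one, Matrix.head_cons,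
    Matrix.cons_val_two, Matrix.tail_cons] at ht
  have hx' : ⟪ν, b - a⟫ = 0 := by rw [real_inner_comm]; exact hx
  have hy' : ⟪ν, w - a⟫ = 0 := by rw [real_inner_comm]; exact hy
  have hνμ : ⟪ν, μ⟫ = t 0 * ‖ν‖^2 := by
    rw [ht, inner_add_right, inner_add_right, real_inner_smul_right, real_inner_smul_right,
      real_inner_smul_right, hx', hy', real_inner_self_eq_norm_sq]
    ring
  have hcmμ : ⟪c - m, μ⟫ = t 0 * ⟪c - m, ν⟫ := by
    rw [ht, inner_add_right, inner_add_right, real_inner_smul_right, real_inner_smul_right,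
      real_inner_smul_right, h1, h3]
    ring
  have hcaμ : ⟪c - a, μ⟫ = ⟪c - m, μ⟫ := by
    have hsplit : c - a = (c - m) + (m - a) := by abel
    have hma : m - a = (2⁻¹ : ℝ) • (b - a) := by
      rw [hm, midpoint_eq_smul_add, invOf_eq_inv] at *
      module
    rw [hsplit, inner_add_left, hma, real_inner_smul_left, hbS]; ring
  have hcqν : ⟪c - q, ν⟫ = ⟪c - m, ν⟫ := by
    have hsplit : c - q = (c - m) + (m - q) := by abel
    have hmq : m - q = (2⁻¹ : ℝ) • ((a - q) + (b - q)) := by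
      rw [hm, midpoint_eq_smul_add, invOf_eq_inv] at *
      module
    rw [hsplit, inner_add_left, hmq, real_inner_smul_left, inner_add_left, haQ, hbQ]; ring
  rw [hcaμ, hcmμ, hcqν, hνμ]; ring

set_option maxHeartbeats 1000000 in
/-- Let `Q = {x | ⟪x − q, ν⟫ = 0}` be a plane in `ℝ³` (`ν ≠ 0`), and let
`a, b, w₁, w₂ ∈ Q` span nondegenerate triangles `[a b w₁]`, `[a b w₂]` with right angles
at `w₁` and `w₂` (common hypotenuse `[ab]`).  Let `u₁, u₂` lie in the same open halfspace
bounded by `Q`, giving nondegenerate tetrahedra `σ₁ = [a b w₁ u₁]`, `σ₂ = [a b w₂ u₂]`.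
If there is a plane `S = {x | ⟪x − a, μ⟫ = 0}` through `a` and `b` with `σ₁` in one
closed halfspace of `S` and `σ₂` in the other, then `σ₁` and `σ₂` are not both
3-well-centered. -/
theorem not_both_isWellCentered_of_right_triangles_on_face
    (q ν : E3) (hν : ν ≠ 0)
    (a b w₁ w₂ u₁ u₂ : E3)
    (haQ : ⟪a - q, ν⟫ = 0) (hbQ : ⟪b - q, ν⟫ = 0)
    (hw₁Q : ⟪w₁ - q, ν⟫ = 0) (hw₂Q : ⟪w₂ - q, ν⟫ = 0)
    (htri₁ : AffineIndependent ℝ ![a, b, w₁]) (htri₂ : AffineIndependent ℝ ![a, b, w₂])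
    (hright₁ : ⟪a - w₁, b - w₁⟫ = 0) (hright₂ : ⟪a - w₂, b - w₂⟫ = 0)
    (hside : (0 < ⟪u₁ - q, ν⟫ ∧ 0 < ⟪u₂ - q, ν⟫) ∨ (⟪u₁ - q, ν⟫ < 0 ∧ ⟪u₂ - q, ν⟫ < 0))
    (h₁ : AffineIndependent ℝ ![a, b, w₁, u₁]) (h₂ : AffineIndependent ℝ ![a, b, w₂, u₂])
    (μ : E3) (hμ : μ ≠ 0) (hbS : ⟪b - a, μ⟫ = 0)
    (hσ₁S : ∀ x ∈ convexHull ℝ ({a, b, w₁, u₁} : Set E3), 0 ≤ ⟪x - a, μ⟫)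
    (hσ₂S : ∀ x ∈ convexHull ℝ ({a, b, w₂, u₂} : Set E3), ⟪x - a, μ⟫ ≤ 0) :
    ¬((⟨![a, b, w₁, u₁], h₁⟩ : Affine.Simplex ℝ E3 3).IsWellCentered ∧
      (⟨![a, b, w₂, u₂], h₂⟩ : Affine.Simplex ℝ E3 3).IsWellCentered) := by
  rintro ⟨⟨wt1, hs1, hp1, hc1⟩, wt2, hs2, hp2, hc2⟩
  set σ1 : Affine.Simplex ℝ E3 3 := ⟨![a, b, w₁, u₁], h₁⟩ with hσ1
  set σ2 : Affine.Simplex ℝ E3 3 := ⟨![a, b, w₂, u₂], h₂⟩ with hσ2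
  set c1 := σ1.circumcenter with hc1def
  set c2 := σ2.circumcenter with hc2def
  have d1 : ∀ i, dist (σ1.points i) c1 = σ1.circumradius :=
    fun i => σ1.dist_circumcenter_eq_circumradius i
  have d2 : ∀ i, dist (σ2.points i) c2 = σ2.circumradius :=
    fun i => σ2.dist_circumcenter_eq_circumradius i
  have hca1 : dist a c1 = dist b c1 := (d1 0).trans (d1 1).symm
  have hcw1 : dist a c1 = dist w₁ c1 := (d1 0).trans (d1 2).symm
  have hca2 : dist a c2 = dist b c2 := (d2 0).trans (d2 1).symm
  have hcw2 : dist a c2 = dist w₂ c2 := (d2 0).trans (d2 2).symm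
  have A1 : ⟪c1 - q, ν⟫ = wt1 3 * ⟪u₁ - q, ν⟫ := by
    rw [← hc1, combo_inner hs1]
    show wt1 0 * ⟪a - q, ν⟫ + wt1 1 * ⟪b - q, ν⟫ + wt1 2 * ⟪w₁ - q, ν⟫ +
      wt1 3 * ⟪u₁ - q, ν⟫ = _
    rw [haQ, hbQ, hw₁Q]; ring
  have A2 : ⟪c2 - q, ν⟫ = wt2 3 * ⟪u₂ - q, ν⟫ := by
    rw [← hc2, combo_inner hs2]
    show wt2 0 * ⟪a - q, ν⟫ + wt2 1 * ⟪b - q, ν⟫ + wt2 2 * ⟪w₂ - q, ν⟫ +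
      wt2 3 * ⟪u₂ - q, ν⟫ = _
    rw [haQ, hbQ, hw₂Q]; ring
  have B1 : ⟪c1 - a, μ⟫ = wt1 2 * ⟪w₁ - a, μ⟫ + wt1 3 * ⟪u₁ - a, μ⟫ := by
    rw [← hc1, combo_inner hs1]
    show wt1 0 * ⟪a - a, μ⟫ + wt1 1 * ⟪b - a, μ⟫ + wt1 2 * ⟪w₁ - a, μ⟫ +
      wt1 3 * ⟪u₁ - a, μ⟫ = _
    rw [sub_self, inner_zero_left, hbS]; ring
  have B2 : ⟪c2 - a, μ⟫ = wt2 2 * ⟪w₂ - a, μ⟫ + wt2 3 * ⟪u₂ - a, μ⟫ := by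
    rw [← hc2, combo_inner hs2]
    show wt2 0 * ⟪a - a, μ⟫ + wt2 1 * ⟪b - a, μ⟫ + wt2 2 * ⟪w₂ - a, μ⟫ +
      wt2 3 * ⟪u₂ - a, μ⟫ = _
    rw [sub_self, inner_zero_left, hbS]; ring
  have hw1μ : 0 ≤ ⟪w₁ - a, μ⟫ := hσ₁S w₁ (subset_convexHull ℝ _ (by simp))
  have hu1μ : 0 ≤ ⟪u₁ - a, μ⟫ := hσ₁S u₁ (subset_convexHull ℝ _ (by simp))
  have hw2μ : ⟪w₂ - a, μ⟫ ≤ 0 := hσ₂S w₂ (subset_convexHull ℝ _ (by simp))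
  have hu2μ : ⟪u₂ - a, μ⟫ ≤ 0 := hσ₂S u₂ (subset_convexHull ℝ _ (by simp))
  have hμμ : ⟪μ, b - a⟫ = 0 := by rw [real_inner_comm]; exact hbS
  have notboth : ∀ w u : E3, AffineIndependent ℝ ![a, b, w, u] →
      ⟪w - a, μ⟫ = 0 → ⟪u - a, μ⟫ = 0 → False := by
    intro w u hind hw0 hu0
    have li3 : LinearIndependent ℝ ![b - a, w - a, u - a] := by
      rw [Fintype.linearIndependent_iff]
      intro g hg
      rw [Fin.sum_univ_three] at hg
      simp only [Matrix.cons_val_zero, Matrix.cons_val_one, Matrix.head_cons,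
        Matrix.cons_val_two, Matrix.tail_cons] at hg
      obtain ⟨e1, e2, e3⟩ := liDiff3 hind hg
      intro i; fin_cases i <;> simp [e1, e2, e3]
    obtain ⟨t, ht⟩ := rep3 li3 μ
    simp only [Matrix.cons_val_zero, Matrix.cons_val_one, Matrix.head_cons,
      Matrix.cons_val_two, Matrix.tail_cons] at ht
    have hw0' : ⟪μ, w - a⟫ = 0 := by rw [real_inner_comm]; exact hw0
    have hu0' : ⟪μ, u - a⟫ = 0 := by rw [real_inner_comm]; exact hu0
    have h0 : ⟪μ, μ⟫ = 0 := by
      nth_rewrite 2 [ht]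
      rw [inner_add_right, inner_add_right, real_inner_smul_right, real_inner_smul_right,
        real_inner_smul_right, hμμ, hw0', hu0']; ring
    exact hμ (inner_self_eq_zero.mp h0)
  have hB1 : 0 < ⟪c1 - a, μ⟫ := by
    rw [B1]
    rcases hw1μ.lt_or_eq with h | h
    · linarith [mul_pos (hp1 2) h, mul_nonneg (hp1 3).le hu1μ]
    · rcases hu1μ.lt_or_eq with h' | h'
      · linarith [mul_pos (hp1 3) h', mul_nonneg (hp1 2).le hw1μ]
      · exact (notboth w₁ u₁ h₁ h.symm h'.symm).elim
  have hB2 : ⟪c2 - a, μ⟫ < 0 := by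
    rw [B2]
    rcases hw2μ.lt_or_eq with h | h
    · linarith [mul_neg_of_pos_of_neg (hp2 2) h, mul_nonpos_of_nonneg_of_nonpos (hp2 3).le hu2μ]
    · rcases hu2μ.lt_or_eq with h' | h'
      · linarith [mul_neg_of_pos_of_neg (hp2 3) h', mul_nonpos_of_nonneg_of_nonpos (hp2 2).le hw2μ]
      · exact (notboth w₂ u₂ h₂ h h').elim
  have hA1A2 : 0 < ⟪c1 - q, ν⟫ * ⟪c2 - q, ν⟫ := by
    rw [A1, A2]
    rcases hside with ⟨s1, s2⟩ | ⟨s1, s2⟩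
    · exact mul_pos (mul_pos (hp1 3) s1) (mul_pos (hp2 3) s2)
    · exact mul_pos_of_neg_of_neg (mul_neg_of_pos_of_neg (hp1 3) s1)
        (mul_neg_of_pos_of_neg (hp2 3) s2)
  have K1 := key_geom hν haQ hbQ hw₁Q htri₁ hright₁ hbS hca1 hcw1
  have K2 := key_geom hν haQ hbQ hw₂Q htri₂ hright₂ hbS hca2 hcw2
  have hν2 : 0 < ‖ν‖^2 := pow_pos (norm_pos_iff.mpr hν) 2
  have KK : (⟪c1 - a, μ⟫ * ⟪c2 - a, μ⟫) * (‖ν‖^2 * ‖ν‖^2) =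
      (⟪c1 - q, ν⟫ * ⟪c2 - q, ν⟫) * (⟪ν, μ⟫ * ⟪ν, μ⟫) := by
    linear_combination (⟪c2 - a, μ⟫ * ‖ν‖^2) * K1 + (⟪c1 - q, ν⟫ * ⟪ν, μ⟫) * K2
  have Lneg : (⟪c1 - a, μ⟫ * ⟪c2 - a, μ⟫) * (‖ν‖^2 * ‖ν‖^2) < 0 :=
    mul_neg_of_neg_of_pos (mul_neg_of_pos_of_neg hB1 hB2) (mul_pos hν2 hν2)
  have Rnn : 0 ≤ (⟪c1 - q, ν⟫ * ⟪c2 - q, ν⟫) * (⟪ν, μ⟫ * ⟪ν, μ⟫) :=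
    mul_nonneg hA1A2.le (mul_self_nonneg _)
  linarith [KK, Lneg, Rnn]

end
end
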